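/- arXiv:2102.03857 — 5 statements merged into one kernel-verified Lean document; each statement's English description precedes it below -/
import Mathlib

section
/- Let n ≥ 3, let I be a multiset of n² positive integers, and let k ≥ 2 be a positive integer. Let G be the graph with vertex set consisting of n² cell vertices v_{i,j} (i,j ∈ [n]), n row vertices R_1,…,R_n, and n column vertices C_1,…,C_n, where each cell vertex v_{i,j} is adjacent exactly to R_i and C_j (and there are no other edges). Let S = I ⊎ {k−1 repeated n times} ⊎ {1 repeated n times}. Then there exists an n × n array of positive integers whose multiset of entries equals I and in which every row and every column sums to k (a semi-magic square on the n × n grid filled from I with sum k) if and only if G is S-fair with fairness constant k. -/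
open scoped Classical

/-- Sum of labels over the open neighborhood of `v`. -/
noncomputable def nbrSum {V : Type*} [Fintype V] (G : SimpleGraph V) (f : V → ℕ) (v : V) : ℕ :=
  ∑ u : V, if G.Adj v u then f u else 0

/-- `f` is a bijective labeling of `G` by the multiset `S` witnessing fairness constant `k`. -/
def IsFairLabeling {V : Type*} [Fintype V] (G : SimpleGraph V) (S : Multiset ℕ)
    (f : V → ℕ) (k : ℕ) : Prop :=
  Finset.univ.val.map f = S ∧ ∀ v : V, nbrSum G f v = k

/-- `G` is `S`-fair. -/
def IsFair {V : Type*} [Fintype V] (G : SimpleGraph V) (S : Multiset ℕ) : Prop :=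
  ∃ (f : V → ℕ) (k : ℕ), IsFairLabeling G S f k

/-- The graph with a vertex for each cell `(i,j)`, each row `i` and each column `j` of an
`n × n` grid, in which the cell vertex `(i,j)` is adjacent exactly to row `i` and column
`j`. Rows are coded as `Sum.inr (Sum.inl i)`, columns as `Sum.inr (Sum.inr j)`. -/
def gridGraph (n : ℕ) : SimpleGraph ((Fin n × Fin n) ⊕ (Fin n ⊕ Fin n)) :=
  SimpleGraph.fromRel (fun x y =>
    ∃ i j : Fin n, x = Sum.inl (i, j) ∧
      (y = Sum.inr (Sum.inl i) ∨ y = Sum.inr (Sum.inr j)))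

lemma adj_cell {n : ℕ} (i j : Fin n) (u) :
    (gridGraph n).Adj (.inl (i,j)) u ↔ u = .inr (.inl i) ∨ u = .inr (.inr j) := by
  simp only [gridGraph, SimpleGraph.fromRel_adj]
  constructor
  · rintro ⟨hne, ⟨i', j', h1, h2⟩ | ⟨i', j', h1, h2⟩⟩
    · obtain ⟨rfl, rfl⟩ : i' = i ∧ j' = j := by simpa [Prod.ext_iff, eq_comm] using h1
      exact h2
    · simp at h2
  · rintro (rfl | rfl)
    · exact ⟨by simp, Or.inl ⟨i, j, rfl, Or.inl rfl⟩⟩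
    · exact ⟨by simp, Or.inl ⟨i, j, rfl, Or.inr rfl⟩⟩

lemma adj_row {n : ℕ} (r : Fin n) (u) :
    (gridGraph n).Adj (.inr (.inl r)) u ↔ ∃ j, u = .inl (r, j) := by
  simp only [gridGraph, SimpleGraph.fromRel_adj]
  constructor
  · rintro ⟨hne, ⟨i', j', h1, h2⟩ | ⟨i', j', h1, h2⟩⟩
    · simp at h1
    · rcases h2 with h2 | h2
      · obtain rfl : i' = r := by simpa [eq_comm] using h2
        exact ⟨j', h1⟩
      · simp at h2
  · rintro ⟨j, rfl⟩
    exact ⟨by simp, Or.inr ⟨r, j, rfl, Or.inl rfl⟩⟩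

lemma adj_col {n : ℕ} (c : Fin n) (u) :
    (gridGraph n).Adj (.inr (.inr c)) u ↔ ∃ i, u = .inl (i, c) := by
  simp only [gridGraph, SimpleGraph.fromRel_adj]
  constructor
  · rintro ⟨hne, ⟨i', j', h1, h2⟩ | ⟨i', j', h1, h2⟩⟩
    · simp at h1
    · rcases h2 with h2 | h2
      · simp at h2
      · obtain rfl : j' = c := by simpa [eq_comm] using h2
        exact ⟨i', h1⟩
  · rintro ⟨i, rfl⟩
    exact ⟨by simp, Or.inr ⟨i, c, rfl, Or.inr rfl⟩⟩

lemma nbrSum_cell {n : ℕ} (f) (i j : Fin n) :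
    nbrSum (gridGraph n) f (.inl (i,j)) = f (.inr (.inl i)) + f (.inr (.inr j)) := by
  unfold nbrSum
  have key : ∀ u : (Fin n × Fin n) ⊕ (Fin n ⊕ Fin n),
      (if (gridGraph n).Adj (.inl (i,j)) u then f u else 0) =
      (if u = .inr (.inl i) then f (.inr (.inl i)) else 0)
        + (if u = .inr (.inr j) then f (.inr (.inr j)) else 0) := by
    intro u
    by_cases h1 : u = Sum.inr (Sum.inl i) <;> by_cases h2 : u = Sum.inr (Sum.inr j) <;>
      simp [h1, h2, adj_cell]
  rw [Finset.sum_congr rfl (fun u _ => key u), Finset.sum_add_distrib]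
  simp

lemma nbrSum_row {n : ℕ} (f) (r : Fin n) :
    nbrSum (gridGraph n) f (.inr (.inl r)) = ∑ j : Fin n, f (.inl (r, j)) := by
  unfold nbrSum
  rw [Fintype.sum_sum_type]
  have h2 : ∀ q : Fin n ⊕ Fin n,
      (if (gridGraph n).Adj (.inr (.inl r)) (.inr q) then f (.inr q) else 0) = 0 := by
    intro q; simp [adj_row]
  rw [Finset.sum_congr rfl (fun q _ => h2 q)]
  simp only [Finset.sum_const_zero, add_zero]
  have h1 : ∀ p : Fin n × Fin n,
      (if (gridGraph n).Adj (.inr (.inl r)) (.inl p) then f (.inl p) else 0) =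
      (if p.1 = r then f (.inl (p.1, p.2)) else 0) := by
    rintro ⟨a, b⟩
    by_cases h : a = r <;> simp [adj_row, h, Prod.ext_iff]
  rw [Finset.sum_congr rfl (fun p _ => h1 p), Fintype.sum_prod_type]
  have h3 : ∀ a : Fin n, (∑ b : Fin n, if a = r then f (.inl (a, b)) else 0) =
      if a = r then (∑ b : Fin n, f (.inl (a, b))) else 0 := by
    intro a; split <;> simp
  rw [Finset.sum_congr rfl (fun a _ => h3 a), Finset.sum_ite_eq' Finset.univ r
    (fun a => ∑ b : Fin n, f (.inl (a, b)))]
  simp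

lemma nbrSum_col {n : ℕ} (f) (c : Fin n) :
    nbrSum (gridGraph n) f (.inr (.inr c)) = ∑ i : Fin n, f (.inl (i, c)) := by
  unfold nbrSum
  rw [Fintype.sum_sum_type]
  have h2 : ∀ q : Fin n ⊕ Fin n,
      (if (gridGraph n).Adj (.inr (.inr c)) (.inr q) then f (.inr q) else 0) = 0 := by
    intro q; simp [adj_col]
  rw [Finset.sum_congr rfl (fun q _ => h2 q)]
  simp only [Finset.sum_const_zero, add_zero]
  have h1 : ∀ p : Fin n × Fin n,
      (if (gridGraph n).Adj (.inr (.inr c)) (.inl p) then f (.inl p) else 0) =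
      (if p.2 = c then f (.inl (p.1, p.2)) else 0) := by
    rintro ⟨a, b⟩
    by_cases h : b = c <;> simp [adj_col, h, Prod.ext_iff]
  rw [Finset.sum_congr rfl (fun p _ => h1 p), Fintype.sum_prod_type_right]
  have h3 : ∀ b : Fin n, (∑ a : Fin n, if b = c then f (.inl (a, b)) else 0) =
      if b = c then (∑ a : Fin n, f (.inl (a, b))) else 0 := by
    intro b; split <;> simp
  rw [Finset.sum_congr rfl (fun b _ => h3 b), Finset.sum_ite_eq' Finset.univ c
    (fun b => ∑ a : Fin n, f (.inl (a, b)))]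
  simp

lemma univ_map_sum {α β γ : Type*} [Fintype α] [Fintype β] (f : α ⊕ β → γ) :
    (Finset.univ : Finset (α ⊕ β)).val.map f =
      (Finset.univ : Finset α).val.map (fun a => f (.inl a)) +
      (Finset.univ : Finset β).val.map (fun b => f (.inr b)) := by
  rw [← Finset.univ_disjSum_univ, Finset.val_disjSum, Multiset.disjSum,
    Multiset.map_add, Multiset.map_map, Multiset.map_map]
  rfl

/-- there is a semi-magic square on the `n × n` grid filled from `I` with
line sum `k` iff the associated graph is `S`-fair with fairness constant `k`, where
`S = I ⊎ {k-1, …, k-1} ⊎ {1, …, 1}` (each repeated `n` times). -/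
theorem stmt_5 (n : ℕ) (hn : 3 ≤ n) (I : Multiset ℕ) (hIpos : ∀ x ∈ I, 0 < x)
    (hIcard : Multiset.card I = n ^ 2) (k : ℕ) (hk : 2 ≤ k) :
    (∃ M : Fin n → Fin n → ℕ,
        (∀ i j, 0 < M i j) ∧
        (Finset.univ.val.map fun p : Fin n × Fin n => M p.1 p.2) = I ∧
        (∀ i : Fin n, ∑ j : Fin n, M i j = k) ∧
        (∀ j : Fin n, ∑ i : Fin n, M i j = k)) ↔
    (∃ f, IsFairLabeling (gridGraph n)
        (I + Multiset.replicate n (k - 1) + Multiset.replicate n 1) f k) := by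
  have hn0 : 0 < n := by omega
  constructor
  · rintro ⟨M, hpos, hmul, hrow, hcol⟩
    refine ⟨Sum.elim (fun p => M p.1 p.2) (Sum.elim (fun _ => k - 1) (fun _ => 1)), ?_, ?_⟩
    · rw [univ_map_sum, univ_map_sum]
      have h1 : (Finset.univ : Finset (Fin n × Fin n)).val.map
          (fun p : Fin n × Fin n => M p.1 p.2) = I := hmul
      have h2 : (Finset.univ : Finset (Fin n)).val.map (fun _ : Fin n => k - 1) =
          Multiset.replicate n (k - 1) := by
        rw [Multiset.map_const']; simp
      have h3 : (Finset.univ : Finset (Fin n)).val.map (fun _ : Fin n => 1) =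
          Multiset.replicate n 1 := by
        rw [Multiset.map_const']; simp
      simp only [Sum.elim_inl, Sum.elim_inr]
      rw [h1, h2, h3, add_assoc]
    · rintro (⟨i, j⟩ | (r | c))
      · rw [nbrSum_cell]; simp only [Sum.elim_inr, Sum.elim_inl]; omega
      · rw [nbrSum_row]; simpa using hrow r
      · rw [nbrSum_col]; simpa using hcol c
  · rintro ⟨f, hmap, hnbr⟩
    set M : Fin n → Fin n → ℕ := fun i j => f (.inl (i, j)) with hM
    have hcell : ∀ i j : Fin n, f (.inr (.inl i)) + f (.inr (.inr j)) = k := by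
      intro i j; rw [← nbrSum_cell]; exact hnbr _
    have hrow : ∀ i : Fin n, ∑ j : Fin n, M i j = k := by
      intro i; rw [hM]; rw [← nbrSum_row]; exact hnbr _
    have hcol : ∀ j : Fin n, ∑ i : Fin n, M i j = k := by
      intro j; rw [hM]; rw [← nbrSum_col]; exact hnbr _
    set i0 : Fin n := ⟨0, hn0⟩ with hi0
    set a : ℕ := f (.inr (.inl i0)) with ha
    set b : ℕ := f (.inr (.inr i0)) with hb
    have hra : ∀ i : Fin n, f (.inr (.inl i)) = a := by
      intro i; have h1 := hcell i i0; have h2 := hcell i0 i0; omega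
    have hcb : ∀ j : Fin n, f (.inr (.inr j)) = b := by
      intro j; have h1 := hcell i0 j; have h2 := hcell i0 i0; omega
    have hab : a + b = k := hcell i0 i0
    set C : Multiset ℕ := (Finset.univ : Finset (Fin n × Fin n)).val.map
      (fun p => f (.inl p)) with hC
    have hdecomp : C + (Multiset.replicate n a + Multiset.replicate n b) =
        I + Multiset.replicate n (k - 1) + Multiset.replicate n 1 := by
      rw [← hmap, univ_map_sum, univ_map_sum]
      congr 1
      congr 1
      · rw [Multiset.map_congr rfl (fun i _ => hra i), Multiset.map_const']; simp
      · rw [Multiset.map_congr rfl (fun j _ => hcb j), Multiset.map_const']; simp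
    have hSpos : ∀ x ∈ I + Multiset.replicate n (k - 1) + Multiset.replicate n 1, 0 < x := by
      intro x hx
      rw [Multiset.mem_add, Multiset.mem_add] at hx
      rcases hx with (hx | hx) | hx
      · exact hIpos x hx
      · have := Multiset.eq_of_mem_replicate hx; omega
      · have := Multiset.eq_of_mem_replicate hx; omega
    have hfpos : ∀ v, 0 < f v := by
      intro v
      refine hSpos _ ?_
      rw [← hmap]
      exact Multiset.mem_map.2 ⟨v, Finset.mem_univ v, rfl⟩
    have hbound : ∀ i j : Fin n, M i j + 2 ≤ k := by
      intro i j
      have h1 : M i j + ∑ x ∈ Finset.univ.erase j, M i x = ∑ x : Fin n, M i x :=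
        Finset.add_sum_erase Finset.univ (M i) (Finset.mem_univ j)
      have h2 : (Finset.univ.erase j).card • 1 ≤ ∑ x ∈ Finset.univ.erase j, M i x :=
        Finset.card_nsmul_le_sum _ _ _ (fun x _ => hfpos _)
      have h3 : (Finset.univ.erase j).card = n - 1 := by
        rw [Finset.card_erase_of_mem (Finset.mem_univ j), Finset.card_univ, Fintype.card_fin]
      rw [h3, smul_eq_mul, mul_one] at h2
      have h4 := hrow i
      omega
    have hCcount : Multiset.count (k - 1) C = 0 := by
      rw [Multiset.count_eq_zero]
      intro hmem
      obtain ⟨⟨p1, p2⟩, _, hp⟩ := Multiset.mem_map.1 hmem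
      have hb2 := hbound p1 p2
      simp only [hM] at hb2
      omega
    have hcount := congrArg (Multiset.count (k - 1)) hdecomp
    simp only [Multiset.count_add, Multiset.count_replicate, hCcount] at hcount
    have hor : a = k - 1 ∨ b = k - 1 := by
      by_contra hcon
      push_neg at hcon
      obtain ⟨h1, h2⟩ := hcon
      split_ifs at hcount <;> omega
    have hCI : C = I := by
      rcases hor with h | h
      · have hb1 : b = 1 := by omega
        rw [h, hb1, ← add_assoc] at hdecomp
        exact add_right_cancel (add_right_cancel hdecomp)
      · have ha1 : a = 1 := by omega
        rw [h, ha1, add_comm (Multiset.replicate n 1), ← add_assoc] at hdecomp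
        exact add_right_cancel (add_right_cancel hdecomp)
    refine ⟨M, fun i j => hfpos _, ?_, hrow, hcol⟩
    rw [← hCI, hC]
end

section
/- Let G be a finite connected simple graph with at least two vertices having a vertex of degree 1, and let S be a multiset of positive integers with |S| = |V(G)|. If G is S-fair, then G is a star, i.e., there exists a vertex u of G that is adjacent to every other vertex of G and every edge of G is incident to u. -/
open scoped Classical

lemma nbrSum_eq {V : Type*} [Fintype V] (G : SimpleGraph V) (f : V → ℕ) (v : V) :
    nbrSum G f v = ∑ u ∈ G.neighborFinset v, f u := by
  rw [SimpleGraph.neighborFinset_eq_filter, Finset.sum_filter]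
  rfl

/-- a connected graph on at least two vertices with a vertex of degree 1
can be `S`-fair only if it is a star. -/
theorem stmt_7 {V : Type*} [Fintype V] (G : SimpleGraph V)
    (hconn : G.Connected) (hcard : 1 < Fintype.card V)
    (hleaf : ∃ v : V, G.degree v = 1)
    (S : Multiset ℕ) (hSpos : ∀ s ∈ S, 0 < s)
    (hScard : Multiset.card S = Fintype.card V)
    (hfair : IsFair G S) :
    ∃ u : V, (∀ w : V, w ≠ u → G.Adj u w) ∧ (∀ a b : V, G.Adj a b → a = u ∨ b = u) := by
  obtain ⟨f, k, hmap, hsum⟩ := hfair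
  have hpos : ∀ x : V, 0 < f x := by
    intro x
    apply hSpos
    rw [← hmap]
    exact Multiset.mem_map_of_mem f (Finset.mem_univ_val x)
  obtain ⟨v, hv⟩ := hleaf
  obtain ⟨u, hu⟩ : ∃ u, G.neighborFinset v = {u} :=
    Finset.card_eq_one.mp hv
  have hk : k = f u := by
    rw [← hsum v, nbrSum_eq, hu, Finset.sum_singleton]
  -- every neighbor of u has neighborhood exactly {u}
  have star_nbr : ∀ w : V, G.Adj u w → G.neighborFinset w = {u} := by
    intro w hw
    have hu_mem : u ∈ G.neighborFinset w := (SimpleGraph.mem_neighborFinset G w u).mpr hw.symm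
    have hsumw : ∑ x ∈ G.neighborFinset w, f x = f u := by
      rw [← nbrSum_eq, hsum w, hk]
    have hrest : ∑ x ∈ (G.neighborFinset w).erase u, f x = 0 := by
      have := Finset.add_sum_erase _ f hu_mem
      omega
    have herase : (G.neighborFinset w).erase u = ∅ := by
      by_contra h
      obtain ⟨z, hz⟩ := Finset.nonempty_iff_ne_empty.mpr h
      have hz0 : f z = 0 := by
        have := Finset.sum_eq_zero_iff.mp hrest z hz
        exact this
      exact (hpos z).ne' hz0
    ext x
    simp only [Finset.mem_singleton]
    constructor
    · intro hx
      by_contra hne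
      have : x ∈ (G.neighborFinset w).erase u := Finset.mem_erase.mpr ⟨hne, hx⟩
      rw [herase] at this
      exact absurd this (Finset.notMem_empty x)
    · rintro rfl; exact hu_mem
  -- connectivity: every vertex is u or adjacent to u
  have key : ∀ a b : V, G.Walk a b → b = u → (a = u ∨ G.Adj u a) := by
    intro a b p
    induction p with
    | nil => intro h; exact Or.inl h
    | @cons a x b h q ih =>
      intro hb
      rcases ih hb with rfl | hadj
      · exact Or.inr h.symm
      · left
        have hx : G.neighborFinset x = {u} := star_nbr x hadj
        have ha : a ∈ G.neighborFinset x := (SimpleGraph.mem_neighborFinset G x a).mpr h.symm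
        rw [hx, Finset.mem_singleton] at ha
        exact ha
  refine ⟨u, ?_, ?_⟩
  · intro w hw
    rcases key w u (hconn w u).some rfl with h | h
    · exact absurd h hw
    · exact h
  · intro a b hab
    by_cases ha : a = u
    · exact Or.inl ha
    · rcases key a u (hconn a u).some rfl with h | h
      · exact Or.inl h
      · have : G.neighborFinset a = {u} := star_nbr a h
        have hb : b ∈ G.neighborFinset a := (SimpleGraph.mem_neighborFinset G a b).mpr hab
        rw [this, Finset.mem_singleton] at hb
        exact Or.inr hb
end

section
/- Let n ≥ 4 with n divisible by 4, let C_n be the cycle graph on n vertices, let S be a multiset of positive integers with |S| = n, and let k be a nonnegative integer. Then C_n is S-fair with fairness constant k if and only if there exist positive integers a, b with a < k and b < k such that S equals the multiset consisting of each of a, b, k−a, k−b repeated n/4 times (as a multiset disjoint union, so coincidences among a, b, k−a, k−b add multiplicities). -/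
open scoped Classical

/-!
The neighbours of `i` in `C_n` are `i ± 1`, so a labeling `f` has fairness constant `k` iff
`f i + f (i + 2) = k` for all `i`. This recurrence determines `f` from `a = f 0` and `b = f 1`,
and the `4`-periodic pattern `a, b, k - a, k - b, a, b, …` satisfies it, so `f` is that pattern;
positivity of the labels gives `a, b < k`. Conversely, since `4 ∣ n` the pattern closes up
around the cycle, and it uses each of its four values `n / 4` times.
-/

open Function Multiset SimpleGraph Fin.NatCast

lemma Fin.univ_val_map_eq_range_map {α : Type*} {n : ℕ} [NeZero n] (f : Fin n → α) :
    Finset.univ.val.map f = (range n).map (fun i : ℕ => f i) := by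
  have hval : Finset.univ.val.map (Fin.val : Fin n → ℕ) = range n := by
    rw [Fin.univ_val_map, List.ofFn_eq_map, List.map_coe_finRange_eq_range, coe_range]
  rw [← hval, Multiset.map_map]
  simp only [Function.comp_def, Fin.cast_val_eq_self]

lemma Function.Periodic.map_range_mul {α : Type*} {g : ℕ → α} {p : ℕ} (hg : Periodic g p)
    (m : ℕ) : (range (m * p)).map g = m • (range p).map g := by
  induction m with
  | zero => simp
  | succ m ih =>
    rw [add_mul, one_mul, range_add, map_add, ih, Multiset.map_map, succ_nsmul]
    congr 2
    funext i
    simpa [add_comm] using hg.nat_mul m i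

lemma eq_of_add_add_two_eq {g h : ℕ → ℕ} {k : ℕ} (hg : ∀ i, g i + g (i + 2) = k)
    (hh : ∀ i, h i + h (i + 2) = k) (h₀ : g 0 = h 0) (h₁ : g 1 = h 1) : g = h := by
  funext i
  induction i using Nat.twoStepInduction with
  | zero => exact h₀
  | one => exact h₁
  | more i ih _ =>
    have := hg i
    have := hh i
    omega

lemma nbrSum_cycleGraph {n : ℕ} [NeZero n] (hn : 3 ≤ n) (f : Fin n → ℕ) (v : Fin n) :
    nbrSum (cycleGraph n) f v = f (v - 1) + f (v + 1) := by
  obtain ⟨m, rfl⟩ : ∃ m, n = m + 2 := ⟨n - 2, by omega⟩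
  have hne : v - 1 ≠ v + 1 := by
    rw [ne_eq, sub_eq_iff_eq_add, add_assoc, left_eq_add, Fin.ext_iff, Fin.val_add, Fin.val_one]
    simp [Nat.mod_eq_of_lt hn]
  have hadj : ∀ u, (cycleGraph (m + 2)).Adj v u ↔ u ∈ ({v - 1, v + 1} : Finset _) := fun u => by
    rw [← mem_neighborSet, cycleGraph_neighborSet]
    simp
  simp only [nbrSum, hadj]
  rw [Finset.sum_ite_mem, Finset.univ_inter, Finset.sum_pair hne]

lemma forall_nbrSum_cycleGraph_eq_iff {n : ℕ} [NeZero n] (hn : 3 ≤ n) (f : Fin n → ℕ) (k : ℕ) :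
    (∀ v, nbrSum (cycleGraph n) f v = k) ↔ ∀ i : ℕ, f i + f (i + 2 : ℕ) = k := by
  simp only [nbrSum_cycleGraph hn]
  constructor
  · intro h i
    show f i + f (i + 1 + 1 : ℕ) = k
    simpa only [Nat.cast_add, Nat.cast_one, add_sub_cancel_right] using h (i + 1)
  · intro h v
    have : f (v - 1).val + f ((v - 1).val + 1 + 1 : ℕ) = k := h (v - 1).val
    simpa only [Nat.cast_add, Nat.cast_one, Fin.cast_val_eq_self, sub_add_cancel] using this

def cyclePattern (a b k : ℕ) (i : ℕ) : ℕ := ![a, b, k - a, k - b] (i : Fin 4)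

lemma cyclePattern_periodic (a b k : ℕ) : Periodic (cyclePattern a b k) 4 := by
  intro i
  simp [cyclePattern]

lemma cyclePattern_add_cyclePattern_add_two {a b k : ℕ} (ha : a ≤ k) (hb : b ≤ k) (i : ℕ) :
    cyclePattern a b k i + cyclePattern a b k (i + 2) = k := by
  simp only [cyclePattern, Nat.cast_add, Nat.cast_ofNat]
  generalize (i : Fin 4) = j
  fin_cases j <;> simp [ha, hb]

lemma eq_cyclePattern_of_add_add_two_eq {g : ℕ → ℕ} {k : ℕ} (h : ∀ i, g i + g (i + 2) = k) :
    g = cyclePattern (g 0) (g 1) k := by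
  have h₀ : g 0 + g 2 = k := h 0
  have h₁ : g 1 + g 3 = k := h 1
  exact eq_of_add_add_two_eq h (cyclePattern_add_cyclePattern_add_two (by omega) (by omega))
    rfl rfl

lemma map_range_cyclePattern (a b k m : ℕ) :
    (range (4 * m)).map (cyclePattern a b k) =
      replicate m a + replicate m b + replicate m (k - a) + replicate m (k - b) := by
  rw [mul_comm, (cyclePattern_periodic a b k).map_range_mul]
  change m • ({a, b, k - a, k - b} : Multiset ℕ) = _
  simp only [insert_eq_cons, nsmul_cons, nsmul_singleton, add_assoc]

lemma cyclePattern_val_natCast {n : ℕ} [NeZero n] (hn : 4 ∣ n) (a b k i : ℕ) :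
    cyclePattern a b k (i : Fin n) = cyclePattern a b k i := by
  obtain ⟨m, rfl⟩ := hn
  have hper : Periodic (cyclePattern a b k) (4 * m) := by
    simpa [mul_comm] using (cyclePattern_periodic a b k).nat_mul m
  rw [Fin.val_natCast, hper.map_mod_nat]

theorem stmt_8_general (n : ℕ) (hn : 4 ≤ n) (hdvd : 4 ∣ n)
    (S : Multiset ℕ) (hSpos : ∀ s ∈ S, 0 < s) (k : ℕ) :
    (∃ f, IsFairLabeling (SimpleGraph.cycleGraph n) S f k) ↔
      ∃ a b : ℕ, 0 < a ∧ 0 < b ∧ a < k ∧ b < k ∧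
        S = Multiset.replicate (n / 4) a + Multiset.replicate (n / 4) b +
            Multiset.replicate (n / 4) (k - a) + Multiset.replicate (n / 4) (k - b) := by
  obtain ⟨m, rfl⟩ := hdvd
  have : NeZero (4 * m) := ⟨by omega⟩
  simp only [IsFairLabeling, forall_nbrSum_cycleGraph_eq_iff (by omega : 3 ≤ 4 * m),
    Fin.univ_val_map_eq_range_map, Nat.mul_div_cancel_left m four_pos]
  constructor
  · rintro ⟨f, rfl, hf⟩
    set g : ℕ → ℕ := fun i => f i
    have hg := eq_cyclePattern_of_add_add_two_eq (g := g) hf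
    have hpos : ∀ i < 4, 0 < g i := fun i hi =>
      hSpos _ (mem_map_of_mem _ (mem_range.2 (by omega)))
    have h₀ : g 0 + g 2 = k := hf 0
    have h₁ : g 1 + g 3 = k := hf 1
    have := hpos 2 (by norm_num)
    have := hpos 3 (by norm_num)
    refine ⟨g 0, g 1, hpos 0 (by norm_num), hpos 1 (by norm_num), by omega, by omega, ?_⟩
    rw [← map_range_cyclePattern, ← hg]
  · rintro ⟨a, b, -, -, hak, hbk, rfl⟩
    have hcast := cyclePattern_val_natCast (n := 4 * m) (dvd_mul_right 4 m) a b k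
    refine ⟨fun v => cyclePattern a b k v, ?_, ?_⟩
    · simp only [hcast, map_range_cyclePattern]
    · simpa only [hcast] using cyclePattern_add_cyclePattern_add_two hak.le hbk.le

/-- for `4 ∣ n`, the cycle `C_n` is `S`-fair with fairness constant `k` iff
`S` consists of `a, b, k-a, k-b` each repeated `n/4` times, for some `0 < a, b < k`. -/
theorem stmt_8 (n : ℕ) (hn : 4 ≤ n) (hdvd : 4 ∣ n)
    (S : Multiset ℕ) (hSpos : ∀ s ∈ S, 0 < s) (hScard : Multiset.card S = n) (k : ℕ) :
    (∃ f, IsFairLabeling (SimpleGraph.cycleGraph n) S f k) ↔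
      ∃ a b : ℕ, 0 < a ∧ 0 < b ∧ a < k ∧ b < k ∧
        S = Multiset.replicate (n / 4) a + Multiset.replicate (n / 4) b +
            Multiset.replicate (n / 4) (k - a) + Multiset.replicate (n / 4) (k - b) :=
  stmt_8_general n hn hdvd S hSpos k
end

section
/- Let m be a positive even integer, let W be a multiset of 3m positive integers, and let G = (m/2)·K_{3,3} be the disjoint union of m/2 copies of the complete bipartite graph K_{3,3}. Then G is W-fair if and only if W can be partitioned into m multisets W_1, …, W_m, each of size 3, such that ∑ W_i = (∑ W)/m for every i ∈ [m]. -/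
open scoped Classical

/-- The disjoint union of `t` vertex-disjoint copies of the graph `H`. -/
def copies (t : ℕ) {W : Type*} (H : SimpleGraph W) : SimpleGraph (Fin t × W) where
  Adj x y := x.1 = y.1 ∧ H.Adj x.2 y.2
  symm := ⟨fun _ _ h => ⟨h.1.symm, h.2.symm⟩⟩
  loopless := ⟨fun x h => H.loopless.irrefl x.2 h.2⟩

/-!
In `K_{3,3}` the neighbourhood of a vertex is the whole opposite side, so a labeling of
`(m/2)·K_{3,3}` is fair with constant `k` exactly when each of its `m` sides carries three labels
summing to `k`. The sides of a fair labeling are therefore the required triples, and conversely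
triples of equal sum can be placed on the sides. Summing over all sides forces `k = (∑ W)/m`.
-/

open Finset

theorem Multiset.exists_fin_map_eq {α : Type*} {n : ℕ} (S : Multiset α)
    (hS : Multiset.card S = n) : ∃ g : Fin n → α, univ.val.map g = S := by
  obtain ⟨l, rfl⟩ : ∃ l : List α, (l : Multiset α) = S := Quotient.exists_rep S
  rw [Multiset.coe_card] at hS
  subst hS
  exact ⟨l.get, by rw [Fin.univ_val_map, List.ofFn_get]⟩

theorem Finset.univ_val_map_eq_sum_singleton {ι β : Type*} [Fintype ι] (f : ι → β) :
    univ.val.map f = ∑ i, ({f i} : Multiset β) := by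
  rw [← Multiset.sum_map_singleton (univ.val.map f), Multiset.map_map]
  rfl

theorem Finset.univ_val_map_eq_sum_of_equiv {ι κ V β : Type*} [Fintype ι] [Fintype κ]
    [Fintype V] (σ : ι × κ ≃ V) (f : V → β) :
    univ.val.map f = ∑ i, univ.val.map (fun a => f (σ (i, a))) := by
  simp only [univ_val_map_eq_sum_singleton]
  rw [← Fintype.sum_prod_type' (fun i a => ({f (σ (i, a))} : Multiset β))]
  exact (Fintype.sum_equiv σ _ _ fun _ => rfl).symm

theorem exists_blockLabeling_iff_exists_partition {ι κ β : Type*} [Fintype ι] [Fintype κ]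
    [AddCommMonoid β] (e : κ ≃ ι) (n : ℕ) (W : Multiset β) (k : β) :
    (∃ g : ι → Fin n → β, ∑ i, univ.val.map (g i) = W ∧ ∀ i, ∑ a, g i a = k) ↔
      ∃ P : κ → Multiset β, ∑ j, P j = W ∧ (∀ j, Multiset.card (P j) = n) ∧
        ∀ j, (P j).sum = k := by
  constructor
  · rintro ⟨g, hW, hk⟩
    refine ⟨fun j => univ.val.map (g (e j)), ?_, fun j => by simp, fun j => hk (e j)⟩
    rw [← hW]
    exact Fintype.sum_equiv e _ _ fun _ => rfl
  · rintro ⟨P, hW, hcard, hk⟩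
    choose g hg using fun j => (P j).exists_fin_map_eq (hcard j)
    refine ⟨fun i => g (e.symm i), ?_, fun i => ?_⟩
    · rw [← hW]
      exact Fintype.sum_equiv e.symm _ _ fun i => hg (e.symm i)
    · rw [← hk (e.symm i), ← hg (e.symm i)]
      rfl

theorem exists_partition_sum_eq_div_iff (m n : ℕ) (W : Multiset ℕ) :
    (∃ k, ∃ P : Fin m → Multiset ℕ, ∑ i, P i = W ∧ (∀ i, Multiset.card (P i) = n) ∧
        ∀ i, (P i).sum = k) ↔
      ∃ P : Fin m → Multiset ℕ, ∑ i, P i = W ∧ (∀ i, Multiset.card (P i) = n) ∧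
        ∀ i, (P i).sum = W.sum / m := by
  refine ⟨?_, fun h => ⟨_, h⟩⟩
  rintro ⟨k, P, hW, hcard, hk⟩
  have hWsum : W.sum = m * k := by
    simp [← hW, Multiset.sum_sum, hk]
  exact ⟨P, hW, hcard, fun i => by rw [hWsum, Nat.mul_div_cancel_left _ i.pos, hk]⟩

theorem nbrSum_copies {t : ℕ} {U : Type*} [Fintype U] (H : SimpleGraph U)
    (f : Fin t × U → ℕ) (c : Fin t) (u : U) :
    nbrSum (copies t H) f (c, u) = nbrSum H (fun u' => f (c, u')) u := by
  rw [nbrSum, nbrSum, Fintype.sum_prod_type, Finset.sum_eq_single c]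
  · simp [copies]
  · intro c' _ hc'
    simp [copies, Ne.symm hc']
  · simp

theorem nbrSum_completeBipartiteGraph_inl {α β : Type*} [Fintype α] [Fintype β]
    (f : α ⊕ β → ℕ) (a : α) :
    nbrSum (completeBipartiteGraph α β) f (Sum.inl a) = ∑ b, f (Sum.inr b) := by
  simp [nbrSum, Fintype.sum_sum_type]

theorem nbrSum_completeBipartiteGraph_inr {α β : Type*} [Fintype α] [Fintype β]
    (f : α ⊕ β → ℕ) (b : β) :
    nbrSum (completeBipartiteGraph α β) f (Sum.inr b) = ∑ a, f (Sum.inl a) := by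
  simp [nbrSum, Fintype.sum_sum_type]

/-- The vertices of `t` copies of `K_{α,α}`, listed side by side: `((b, c), a)` is vertex `a` on
side `b` of copy `c`. -/
def copiesSideEquiv (t : ℕ) (α : Type*) : (Bool × Fin t) × α ≃ Fin t × (α ⊕ α) :=
  ((Equiv.prodComm _ _).prodCongr (Equiv.refl α)).trans
    ((Equiv.prodAssoc _ _ _).trans ((Equiv.refl _).prodCongr (Equiv.boolProdEquivSum α)))

section CopiesOfCompleteBipartite

variable {t : ℕ} {α : Type*} [Fintype α]

theorem nbrSum_copies_completeBipartiteGraph (f : Fin t × (α ⊕ α) → ℕ) (b : Bool) (c : Fin t)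
    (a : α) :
    nbrSum (copies t (completeBipartiteGraph α α)) f (copiesSideEquiv t α ((b, c), a)) =
      ∑ a', f (copiesSideEquiv t α ((!b, c), a')) := by
  cases b <;>
    simp [copiesSideEquiv, nbrSum_copies, nbrSum_completeBipartiteGraph_inl,
      nbrSum_completeBipartiteGraph_inr]

theorem isFairLabeling_copies_completeBipartiteGraph_iff [Nonempty α] (W : Multiset ℕ)
    (f : Fin t × (α ⊕ α) → ℕ) (k : ℕ) :
    IsFairLabeling (copies t (completeBipartiteGraph α α)) W f k ↔
      ∑ s, univ.val.map (fun a => f (copiesSideEquiv t α (s, a))) = W ∧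
        ∀ s, ∑ a, f (copiesSideEquiv t α (s, a)) = k := by
  rw [IsFairLabeling, univ_val_map_eq_sum_of_equiv (copiesSideEquiv t α),
    (copiesSideEquiv t α).symm.forall_congr_left]
  refine and_congr_right fun _ => ⟨fun h ⟨b, c⟩ => ?_, fun h ⟨⟨b, c⟩, a⟩ => ?_⟩
  · simpa [nbrSum_copies_completeBipartiteGraph] using h ((!b, c), Classical.arbitrary α)
  · simpa [nbrSum_copies_completeBipartiteGraph] using h (!b, c)

theorem isFair_copies_completeBipartiteGraph_iff [Nonempty α] (W : Multiset ℕ) :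
    IsFair (copies t (completeBipartiteGraph α α)) W ↔
      ∃ k, ∃ g : Bool × Fin t → α → ℕ, ∑ s, univ.val.map (g s) = W ∧ ∀ s, ∑ a, g s a = k := by
  simp only [IsFair, isFairLabeling_copies_completeBipartiteGraph_iff]
  rw [exists_comm]
  refine exists_congr fun k => ⟨fun ⟨f, h⟩ => ⟨fun s a => f (copiesSideEquiv t α (s, a)), h⟩,
    fun ⟨g, h⟩ => ⟨fun v => g ((copiesSideEquiv t α).symm v).1 ((copiesSideEquiv t α).symm v).2,
      by simpa using h⟩⟩

end CopiesOfCompleteBipartite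

theorem stmt_10_general (m : ℕ) (hme : 2 ∣ m)
    (W : Multiset ℕ) :
    IsFair (copies (m / 2) (completeBipartiteGraph (Fin 3) (Fin 3))) W ↔
      ∃ P : Fin m → Multiset ℕ,
        (∑ i : Fin m, P i) = W ∧
        (∀ i : Fin m, Multiset.card (P i) = 3) ∧
        (∀ i : Fin m, (P i).sum = W.sum / m) := by
  obtain ⟨t, rfl⟩ := hme
  let e : Fin (2 * t) ≃ Bool × Fin t :=
    finProdFinEquiv.symm.trans (finTwoEquiv.prodCongr (Equiv.refl _))
  rw [Nat.mul_div_cancel_left t two_pos, isFair_copies_completeBipartiteGraph_iff,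
    ← exists_partition_sum_eq_div_iff]
  exact exists_congr fun k => exists_blockLabeling_iff_exists_partition e 3 W k

/-- for even `m`, the disjoint union of `m/2` copies of `K_{3,3}` is
`W`-fair iff `W` partitions into `m` triples each of sum `(∑ W)/m`. -/
theorem stmt_10 (m : ℕ) (hm : 0 < m) (hme : 2 ∣ m)
    (W : Multiset ℕ) (hWpos : ∀ w ∈ W, 0 < w) (hWcard : Multiset.card W = 3 * m) :
    IsFair (copies (m / 2) (completeBipartiteGraph (Fin 3) (Fin 3))) W ↔
      ∃ P : Fin m → Multiset ℕ,
        (∑ i : Fin m, P i) = W ∧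
        (∀ i : Fin m, Multiset.card (P i) = 3) ∧
        (∀ i : Fin m, (P i).sum = W.sum / m) :=
  stmt_10_general m hme W
end

section
/- Let m be a positive odd integer, let W be a multiset of 3m integers each greater than 1, assume m divides ∑ W, and set sum = (∑ W)/m. Let G = ((m+1)/2)·K_{3,3} be the disjoint union of (m+1)/2 copies of K_{3,3}, and let S = W ⊎ {sum − 2, 1, 1}. Then G is S-fair if and only if W can be partitioned into m multisets W_1, …, W_m, each of size 3, such that ∑ W_i = sum for every i ∈ [m]. -/
open scoped Classical

/-!
A labeling of `t • K_{n,n}` is fair with constant `k` exactly when each of the `2t` sides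
carries label sum `k`. So `S`-fairness means splitting `S` into `m + 1` triples of a common
sum, and that sum must be `sum`, since `∑ S = (m + 1) * sum`. The triple containing `sum - 2`
is completed by two positive labels adding up to `2`, i.e. it is `{sum - 2, 1, 1}`, and the
remaining `m` triples partition `W`.
-/

open Finset

lemma Multiset.exists_map_univ_eq {α β : Type*} [Fintype α] (X : Multiset β)
    (h : Multiset.card X = Fintype.card α) : ∃ g : α → β, univ.val.map g = X := by
  let e : α ≃ X := Fintype.equivOfCardEq (by rw [Multiset.card_coe, h])
  refine ⟨fun a => (e a : β), ?_⟩
  conv_rhs => rw [← Multiset.map_univ_coe X, ← Multiset.map_univ_val_equiv e, Multiset.map_map]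
  rfl

lemma Multiset.map_univ_eq_sum_singleton {α β : Type*} [Fintype α] (f : α → β) :
    univ.val.map f = ∑ a, ({f a} : Multiset β) :=
  (Multiset.sum_map_singleton _).symm.trans (by rw [Multiset.map_map]; rfl)

def IsSumPartition (T : Multiset (Multiset ℕ)) (n k : ℕ) (S : Multiset ℕ) : Prop :=
  T.sum = S ∧ ∀ X ∈ T, Multiset.card X = n ∧ X.sum = k

namespace IsSumPartition

variable {T : Multiset (Multiset ℕ)} {n k : ℕ} {S : Multiset ℕ}

lemma sum_eq (hT : IsSumPartition T n k S) : S.sum = Multiset.card T * k := by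
  rw [← hT.1, ← Multiset.join, Multiset.sum_join,
    Multiset.map_congr rfl fun X hX => (hT.2 X hX).2, Multiset.map_const',
    Multiset.sum_replicate, smul_eq_mul]

lemma cons (hT : IsSumPartition T n k S) {X : Multiset ℕ} (hXn : Multiset.card X = n)
    (hXk : X.sum = k) : IsSumPartition (X ::ₘ T) n k (X + S) := by
  refine ⟨by rw [Multiset.sum_cons, hT.1], fun Y hY => ?_⟩
  rcases Multiset.mem_cons.mp hY with rfl | hY
  exacts [⟨hXn, hXk⟩, hT.2 Y hY]

lemma of_cons {X : Multiset ℕ} (hT : IsSumPartition (X ::ₘ T) n k (X + S)) :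
    IsSumPartition T n k S :=
  ⟨add_left_cancel (by rw [← Multiset.sum_cons, hT.1]),
    fun Y hY => hT.2 Y (Multiset.mem_cons_of_mem hY)⟩

end IsSumPartition

lemma exists_fin_partition_iff (m n k : ℕ) (S : Multiset ℕ) :
    (∃ P : Fin m → Multiset ℕ, ∑ i, P i = S ∧ (∀ i, Multiset.card (P i) = n) ∧
        ∀ i, (P i).sum = k) ↔
      ∃ T, Multiset.card T = m ∧ IsSumPartition T n k S := by
  constructor
  · rintro ⟨P, hS, hn, hk⟩
    refine ⟨univ.val.map P, by simp, hS, ?_⟩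
    simp only [Multiset.mem_map, mem_val, mem_univ, true_and]
    rintro _ ⟨i, rfl⟩
    exact ⟨hn i, hk i⟩
  · rintro ⟨T, hm, hS, hT⟩
    obtain ⟨P, rfl⟩ := T.exists_map_univ_eq (α := Fin m) (by simp [hm])
    have hP i : Multiset.card (P i) = n ∧ (P i).sum = k :=
      hT _ (Multiset.mem_map_of_mem _ (mem_univ i))
    exact ⟨P, hS, fun i => (hP i).1, fun i => (hP i).2⟩

section CopiesOfCompleteBipartite

variable {α β : Type*} [Fintype α] [Fintype β] {t : ℕ}

lemma nbrSum_copies_completeBipartiteGraph_inl (f : Fin t × (α ⊕ β) → ℕ) (i : Fin t)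
    (a : α) :
    nbrSum (copies t (completeBipartiteGraph α β)) f (i, .inl a) = ∑ b, f (i, .inr b) := by
  simp [nbrSum, copies, Fintype.sum_prod_type, Fintype.sum_sum_type]

lemma nbrSum_copies_completeBipartiteGraph_inr (f : Fin t × (α ⊕ β) → ℕ) (i : Fin t)
    (b : β) :
    nbrSum (copies t (completeBipartiteGraph α β)) f (i, .inr b) = ∑ a, f (i, .inl a) := by
  simp [nbrSum, copies, Fintype.sum_prod_type, Fintype.sum_sum_type]

lemma map_univ_prod_sum (f : Fin t × (α ⊕ β) → ℕ) :
    univ.val.map f =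
      ∑ i, (univ.val.map (fun a => f (i, .inl a)) + univ.val.map (fun b => f (i, .inr b))) := by
  simp only [Multiset.map_univ_eq_sum_singleton, Fintype.sum_prod_type, Fintype.sum_sum_type]

end CopiesOfCompleteBipartite

lemma exists_isFairLabeling_copies_iff {α : Type*} [Fintype α] [Nonempty α] (t k : ℕ)
    (S : Multiset ℕ) :
    (∃ f, IsFairLabeling (copies t (completeBipartiteGraph α α)) S f k) ↔
      ∃ T, Multiset.card T = 2 * t ∧ IsSumPartition T (Fintype.card α) k S := by
  constructor
  · rintro ⟨f, hS, hk⟩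
    let side (x : α → α ⊕ α) (i : Fin t) : Multiset ℕ := univ.val.map fun a => f (i, x a)
    have hside x i : Multiset.card (side x i) = Fintype.card α := by simp [side]
    have hL i : (side .inl i).sum = k := by
      rw [← hk (i, .inr (Classical.arbitrary α)), nbrSum_copies_completeBipartiteGraph_inr]; rfl
    have hR i : (side .inr i).sum = k := by
      rw [← hk (i, .inl (Classical.arbitrary α)), nbrSum_copies_completeBipartiteGraph_inl]; rfl
    refine ⟨univ.val.map (side .inl) + univ.val.map (side .inr), by simp; omega, ?_, ?_⟩
    · rw [← hS, map_univ_prod_sum, sum_add_distrib, Multiset.sum_add]; rfl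
    · simp only [Multiset.mem_add, Multiset.mem_map, mem_val, mem_univ, true_and]
      rintro _ (⟨i, rfl⟩ | ⟨i, rfl⟩)
      exacts [⟨hside _ i, hL i⟩, ⟨hside _ i, hR i⟩]
  · rintro ⟨T, hcard, hST, hT⟩
    obtain ⟨Q, rfl⟩ := T.exists_map_univ_eq (α := Fin t × Bool) (by simp [hcard]; ring)
    have hQ p : Multiset.card (Q p) = Fintype.card α ∧ (Q p).sum = k :=
      hT _ (Multiset.mem_map_of_mem _ (mem_univ _))
    choose g hg using fun p => (Q p).exists_map_univ_eq (hQ p).1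
    have hsum p : ∑ a, g p a = k := by rw [← (hQ p).2, ← hg]; rfl
    refine ⟨fun p => Sum.elim (g (p.1, false)) (g (p.1, true)) p.2, ?_, ?_⟩
    · rw [map_univ_prod_sum, ← hST]
      simp only [Sum.elim_inl, Sum.elim_inr, hg]
      change ∑ i, (Q (i, false) + Q (i, true)) = ∑ p, Q p
      simp only [Fintype.sum_prod_type, Fintype.sum_bool, add_comm]
    · rintro ⟨i, a | b⟩
      · rw [nbrSum_copies_completeBipartiteGraph_inl]; exact hsum (i, true)
      · rw [nbrSum_copies_completeBipartiteGraph_inr]; exact hsum (i, false)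

section Triples

variable {W : Multiset ℕ} {s : ℕ}

lemma IsSumPartition.triple_mem {T : Multiset (Multiset ℕ)} (hs : 3 ≤ s)
    (hW : ∀ w ∈ W, 0 < w) (hT : IsSumPartition T 3 s (W + {s - 2, 1, 1})) :
    {s - 2, 1, 1} ∈ T := by
  have hpos : ∀ x ∈ T.sum, 0 < x := by
    simp only [hT.1, Multiset.insert_eq_cons, Multiset.mem_add, Multiset.mem_cons,
      Multiset.mem_singleton]
    rintro x (hx | rfl | rfl | rfl)
    exacts [hW x hx, by omega, one_pos, one_pos]
  obtain ⟨X, hXT, hX⟩ : ∃ X ∈ T, s - 2 ∈ X :=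
    Multiset.mem_join.mp (show s - 2 ∈ T.sum by simp [hT.1])
  obtain ⟨R, rfl⟩ := Multiset.exists_cons_of_mem hX
  obtain ⟨hcard, hsum⟩ := hT.2 _ hXT
  obtain ⟨x, y, rfl⟩ := Multiset.card_eq_two.mp (by simpa using hcard)
  have hx := hpos x (Multiset.mem_join.mpr ⟨_, hXT, by simp⟩)
  have hy := hpos y (Multiset.mem_join.mpr ⟨_, hXT, by simp⟩)
  obtain ⟨rfl, rfl⟩ : x = 1 ∧ y = 1 := by simp at hsum; omega
  exact hXT

lemma exists_isSumPartition_add_triple_iff (m : ℕ) (hs : 3 ≤ s) (hW : ∀ w ∈ W, 0 < w) :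
    (∃ T, Multiset.card T = m + 1 ∧ IsSumPartition T 3 s (W + {s - 2, 1, 1})) ↔
      ∃ T, Multiset.card T = m ∧ IsSumPartition T 3 s W := by
  constructor
  · rintro ⟨T, hcard, hT⟩
    have hmem := hT.triple_mem hs hW
    rw [← Multiset.cons_erase hmem, add_comm] at hT
    exact ⟨_, by rw [Multiset.card_erase_of_mem hmem, hcard]; rfl, hT.of_cons⟩
  · rintro ⟨T, hcard, hT⟩
    have hsum : ({s - 2, 1, 1} : Multiset ℕ).sum = s := by simp; omega
    refine ⟨{s - 2, 1, 1} ::ₘ T, by simp [hcard], ?_⟩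
    rw [add_comm]
    exact hT.cons rfl hsum

end Triples

theorem stmt_11_general (m : ℕ) (hmo : Odd m)
    (W : Multiset ℕ) (hWgt : ∀ w ∈ W, 1 < w) (hWcard : Multiset.card W = 3 * m)
    (hdvd : m ∣ W.sum) :
    IsFair (copies ((m + 1) / 2) (completeBipartiteGraph (Fin 3) (Fin 3)))
        (W + {W.sum / m - 2, 1, 1}) ↔
      ∃ P : Fin m → Multiset ℕ,
        (∑ i : Fin m, P i) = W ∧
        (∀ i : Fin m, Multiset.card (P i) = 3) ∧
        (∀ i : Fin m, (P i).sum = W.sum / m) := by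
  set s := W.sum / m
  have hWs : W.sum = m * s := (Nat.mul_div_cancel' hdvd).symm
  have hcopies : 2 * ((m + 1) / 2) = m + 1 := by obtain ⟨r, rfl⟩ := hmo; omega
  have hs : 3 ≤ s := by
    have h2W : Multiset.card W • 2 ≤ W.sum := Multiset.card_nsmul_le_sum hWgt
    rw [hWcard, smul_eq_mul, hWs] at h2W
    exact Nat.le_of_mul_le_mul_left (by linarith) hmo.pos
  have hconst {k T} (hT : IsSumPartition T 3 k (W + {s - 2, 1, 1}))
      (hcard : Multiset.card T = m + 1) : k = s := by
    have h := hT.sum_eq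
    simp only [Multiset.sum_add, hWs, hcard, Multiset.insert_eq_cons, Multiset.sum_cons,
      Multiset.sum_singleton, show s - 2 + (1 + 1) = s by omega] at h
    exact Nat.mul_left_cancel m.succ_pos (by linarith : (m + 1) * k = (m + 1) * s)
  calc _ ↔ ∃ k T, Multiset.card T = m + 1 ∧ IsSumPartition T 3 k (W + {s - 2, 1, 1}) := by
        rw [IsFair, exists_comm]
        simp only [exists_isFairLabeling_copies_iff, hcopies, Fintype.card_fin]
    _ ↔ ∃ T, Multiset.card T = m + 1 ∧ IsSumPartition T 3 s (W + {s - 2, 1, 1}) :=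
        ⟨fun ⟨_, T, hcard, hT⟩ => ⟨T, hcard, by rwa [hconst hT hcard] at hT⟩,
          fun h => ⟨s, h⟩⟩
    _ ↔ ∃ T, Multiset.card T = m ∧ IsSumPartition T 3 s W :=
        exists_isSumPartition_add_triple_iff m hs fun w hw => zero_lt_one.trans (hWgt w hw)
    _ ↔ _ := (exists_fin_partition_iff m 3 s W).symm

/-- for odd `m`, with `W` a multiset of `3m` integers each greater than `1`
such that `m ∣ ∑ W` and `sum = (∑ W)/m`, the disjoint union of `(m+1)/2` copies of
`K_{3,3}` is `(W ⊎ {sum - 2, 1, 1})`-fair iff `W` partitions into `m` triples each of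
sum `sum`. -/
theorem stmt_11 (m : ℕ) (hm : 0 < m) (hmo : Odd m)
    (W : Multiset ℕ) (hWgt : ∀ w ∈ W, 1 < w) (hWcard : Multiset.card W = 3 * m)
    (hdvd : m ∣ W.sum) :
    IsFair (copies ((m + 1) / 2) (completeBipartiteGraph (Fin 3) (Fin 3)))
        (W + {W.sum / m - 2, 1, 1}) ↔
      ∃ P : Fin m → Multiset ℕ,
        (∑ i : Fin m, P i) = W ∧
        (∀ i : Fin m, Multiset.card (P i) = 3) ∧
        (∀ i : Fin m, (P i).sum = W.sum / m) :=
  stmt_11_general m hmo W hWgt hWcard hdvd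
end
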